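/- For all real η and θ: γ5 * γR (−1−η) θ * γR (−η) θ * γR (−1−η) θ * γ5 = γR η θ. -/

import Mathlib

/-!
With `t = θ - π/2`, the matrix `γR η θ` is the reflection matrix of angle `(1 + η) t` and `γ5` is
the one of angle `0`. Two reflections compose to the rotation by the difference of their angles, so
a product of reflections of angles `a, b, c` is the reflection of angle `a - b + c`. The left-hand
side is thus the reflection of angle `0 - (-η t) + (1 - η) t - (-η t) + 0 = (1 + η) t`.
-/

open Real Matrix

/-- The chirality matrix `γ5` in the two-dimensional eigenvalue-pair representation. -/
noncomputable def γ5 : Matrix (Fin 2) (Fin 2) ℝ := !![1, 0; 0, -1]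

/-- The overlap Dirac operator on a non-zero eigenvalue pair. -/
noncomputable def D (θ : ℝ) : Matrix (Fin 2) (Fin 2) ℝ :=
  (2 * Real.cos θ) • !![Real.cos θ, Real.sin θ; -Real.sin θ, Real.cos θ]

/-- The family of right chiral γ-matrices `γ_R^(η)`. -/
noncomputable def γR (η θ : ℝ) : Matrix (Fin 2) (Fin 2) ℝ :=
  !![Real.cos ((1 + η) * (θ - π / 2)), Real.sin ((1 + η) * (θ - π / 2));
     Real.sin ((1 + η) * (θ - π / 2)), -Real.cos ((1 + η) * (θ - π / 2))]

/-- The family of left chiral γ-matrices `γ_L^(η) = γ5 γ_R^(−η) γ5`. -/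
noncomputable def γL (η θ : ℝ) : Matrix (Fin 2) (Fin 2) ℝ := γ5 * γR (-η) θ * γ5


noncomputable def rotationMatrix (φ : ℝ) : Matrix (Fin 2) (Fin 2) ℝ :=
  !![cos φ, -sin φ; sin φ, cos φ]

noncomputable def reflectionMatrix (φ : ℝ) : Matrix (Fin 2) (Fin 2) ℝ :=
  !![cos φ, sin φ; sin φ, -cos φ]

theorem reflectionMatrix_mul_reflectionMatrix (a b : ℝ) :
    reflectionMatrix a * reflectionMatrix b = rotationMatrix (a - b) := by
  ext i j
  fin_cases i <;> fin_cases j <;>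
    simp [reflectionMatrix, rotationMatrix, mul_apply, cos_sub, sin_sub] <;> ring

theorem rotationMatrix_mul_reflectionMatrix (a b : ℝ) :
    rotationMatrix a * reflectionMatrix b = reflectionMatrix (a + b) := by
  ext i j
  fin_cases i <;> fin_cases j <;>
    simp [reflectionMatrix, rotationMatrix, mul_apply, cos_add, sin_add] <;> ring

theorem reflectionMatrix_mul_reflectionMatrix_mul_reflectionMatrix (a b c : ℝ) :
    reflectionMatrix a * reflectionMatrix b * reflectionMatrix c = reflectionMatrix (a - b + c) := by
  rw [reflectionMatrix_mul_reflectionMatrix, rotationMatrix_mul_reflectionMatrix]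

theorem γ5_eq_reflectionMatrix : γ5 = reflectionMatrix 0 := by
  simp [γ5, reflectionMatrix]

theorem γR_eq_reflectionMatrix (η θ : ℝ) : γR η θ = reflectionMatrix ((1 + η) * (θ - π / 2)) :=
  rfl

/-- Lemma B.10 of the paper (equation (eq:secondresultneededinCP)):
`γ5 γ_R^(−1−η) γ_R^(−η) γ_R^(−1−η) γ5 = γ_R^(η)`. -/
theorem γR_CP_conjugation (η θ : ℝ) :
    γ5 * γR (-1 - η) θ * γR (-η) θ * γR (-1 - η) θ * γ5 = γR η θ := by
  simp only [γ5_eq_reflectionMatrix, γR_eq_reflectionMatrix,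
    reflectionMatrix_mul_reflectionMatrix_mul_reflectionMatrix]
  congr 1
  ring
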